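/- If a, b are real with a ≤ 0 ≤ b ≤ a+2, then H_{a,b}(z) = ∫₀^z (1+t)^a/(1-t)^b dt is a convex univalent function in the unit disk; specifically, Re(1 + z·H_{a,b}''(z)/H_{a,b}'(z)) > 0 for all z in D. -/

import Mathlib

/-!
On the circle `‖z‖ = r < 1` write `H' = exp L`. The velocity of `θ ↦ H (r e^{iθ})` has the
continuous argument `ψ θ = θ + π/2 + im L (r e^{iθ})`, with `ψ' = re (1 + z L' z) > 0` and
`ψ (θ + 2π) = ψ θ + 2π`. Hence this closed curve lies strictly on the inner side of each of its
tangent lines except at the point of tangency, so it is a simple curve. By the maximum principle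
(for `exp (i · signed distance)`), `H '' ball 0 r` lies in the intersection of these closed
half-planes; being open, connected and disjoint from the curve, it is the interior of that convex
set. Exhausting the disk by these convex images gives injectivity and convexity on the disk.
-/

open Complex Metric

/-- Pre-Schwarzian derivative of an analytic function. -/
noncomputable def pd (F : ℂ → ℂ) (z : ℂ) : ℂ := deriv (deriv F) z / deriv F z

/-- Dilatation of the harmonic mapping `h + conj g`. -/
noncomputable def dil (h g : ℂ → ℂ) (z : ℂ) : ℂ := deriv g z / deriv h z

/-- Pre-Schwarzian derivative of the harmonic mapping `h + conj g`. -/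
noncomputable def PH (h g : ℂ → ℂ) (z : ℂ) : ℂ :=
  pd h z - (starRingEnd ℂ) (dil h g z) * deriv (dil h g) z / ((1 - ‖dil h g z‖ ^ 2 : ℝ) : ℂ)

/-- Pre-Schwarzian norm. -/
noncomputable def pnorm (P : ℂ → ℂ) : ℝ :=
  ⨆ z : Metric.ball (0 : ℂ) 1, (1 - ‖(z : ℂ)‖ ^ 2) * ‖P (z : ℂ)‖

/-- The range whose boundedness expresses finiteness of the pre-Schwarzian norm. -/
def pbdd (P : ℂ → ℂ) : Prop :=
  BddAbove (Set.range fun z : Metric.ball (0 : ℂ) 1 => (1 - ‖(z : ℂ)‖ ^ 2) * ‖P (z : ℂ)‖)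

/-- `h + conj g` is a sense-preserving harmonic mapping in the unit disk. -/
def SPH (h g : ℂ → ℂ) : Prop :=
  DifferentiableOn ℂ h (Metric.ball (0 : ℂ) 1) ∧
  DifferentiableOn ℂ g (Metric.ball (0 : ℂ) 1) ∧ g 0 = 0 ∧
  ∀ z ∈ Metric.ball (0 : ℂ) 1, ‖deriv g z‖ < ‖deriv h z‖

open Set
open scoped Real

lemma one_sub_mem_slitPlane {z : ℂ} (hz : ‖z‖ < 1) : 1 - z ∈ slitPlane := by
  simpa [sub_eq_add_neg] using mem_slitPlane_of_norm_lt_one (z := -z) (by simpa)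

lemma re_one_add_div_one_sub_pos {z : ℂ} (hz : ‖z‖ < 1) : 0 < ((1 + z) / (1 - z)).re := by
  have hne : (1 : ℂ) - z ≠ 0 := slitPlane_ne_zero (one_sub_mem_slitPlane hz)
  have hsq : z.re * z.re + z.im * z.im < 1 := by
    rw [← normSq_apply, ← Complex.sq_norm]; nlinarith [norm_nonneg z]
  rw [div_re, ← add_div]
  apply div_pos _ (normSq_pos.2 hne)
  simp only [add_re, sub_re, add_im, sub_im, one_re,
    one_im]
  nlinarith

lemma re_one_add_div_add_div_pos {a b : ℝ} (ha : a ≤ 0) (hb0 : 0 ≤ b) (hb : b ≤ a + 2)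
    {z : ℂ} (hz : ‖z‖ < 1) : 0 < (1 + a * z / (1 + z) + b * z / (1 - z)).re := by
  have h₁ : (1 : ℂ) + z ≠ 0 := slitPlane_ne_zero (mem_slitPlane_of_norm_lt_one hz)
  have h₂ : (1 : ℂ) - z ≠ 0 := slitPlane_ne_zero (one_sub_mem_slitPlane hz)
  have hP := re_one_add_div_one_sub_pos (z := -z) (by simpa)
  have hQ := re_one_add_div_one_sub_pos hz
  rw [sub_neg_eq_add, ← sub_eq_add_neg] at hP
  -- the expression is affine in `(a, b)`; at the vertices `(0, 0)`, `(-2, 0)`, `(0, 2)` of the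
  -- triangle it equals `1`, `(1 - z) / (1 + z)` and `(1 + z) / (1 - z)`
  have key : (1 : ℂ) + a * z / (1 + z) + b * z / (1 - z) =
      ((1 + a / 2 - b / 2 : ℝ) : ℂ) + ((-a / 2 : ℝ) : ℂ) * ((1 - z) / (1 + z)) +
        ((b / 2 : ℝ) : ℂ) * ((1 + z) / (1 - z)) := by
    field_simp
    push_cast
    ring
  rw [key, add_re, add_re, ofReal_re, re_ofReal_mul, re_ofReal_mul]
  set P := ((1 - z) / (1 + z)).re
  set Q := ((1 + z) / (1 - z)).re
  obtain ⟨m, hm, hmP, hmQ, hm1⟩ : ∃ m : ℝ, 0 < m ∧ m ≤ P ∧ m ≤ Q ∧ m ≤ 1 :=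
    ⟨min (min P Q) 1, lt_min (lt_min hP hQ) one_pos, (min_le_left _ _).trans (min_le_left _ _),
      (min_le_left _ _).trans (min_le_right _ _), min_le_right _ _⟩
  nlinarith [mul_le_mul_of_nonneg_left hmP (by linarith : (0 : ℝ) ≤ -a / 2),
    mul_le_mul_of_nonneg_left hmQ (by linarith : (0 : ℝ) ≤ b / 2),
    mul_le_mul_of_nonneg_left hm1 (by linarith : (0 : ℝ) ≤ 1 + a / 2 - b / 2)]

section ConvexityCriterion

variable {f L : ℂ → ℂ} {r : ℝ}

lemma range_circleMap_of_nonneg (c : ℂ) {R : ℝ} (hR : 0 ≤ R) :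
    range (circleMap c R) = sphere c R := by
  rw [range_circleMap, abs_of_nonneg hR]

lemma circleMap_mem_ball (hr0 : 0 ≤ r) (hr1 : r < 1) (θ : ℝ) :
    circleMap 0 r θ ∈ ball (0 : ℂ) 1 := by
  rw [mem_ball_zero_iff, norm_circleMap_zero, abs_of_nonneg hr0]
  exact hr1

/-- When `f' = exp ∘ L`, this is a continuous argument of the velocity of
`θ ↦ f (circleMap 0 r θ)`. -/
noncomputable def tangentAngle (L : ℂ → ℂ) (r θ : ℝ) : ℝ :=
  θ + π / 2 + (L (circleMap 0 r θ)).im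

lemma tangentAngle_add_two_pi (L : ℂ → ℂ) (r θ : ℝ) :
    tangentAngle L r (θ + 2 * π) = tangentAngle L r θ + 2 * π := by
  simp only [tangentAngle, periodic_circleMap 0 r θ]
  ring

lemma hasDerivAt_tangentAngle (hL : DifferentiableOn ℂ L (ball 0 1)) (hr0 : 0 ≤ r)
    (hr1 : r < 1) (θ : ℝ) :
    HasDerivAt (tangentAngle L r)
      (1 + circleMap 0 r θ * deriv L (circleMap 0 r θ)).re θ := by
  have hz := circleMap_mem_ball hr0 hr1 θ
  have hLz := (hL.differentiableAt (isOpen_ball.mem_nhds hz)).hasDerivAt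
  have hcomp := hLz.comp θ (hasDerivAt_circleMap 0 r θ)
  have him := imCLM.hasFDerivAt.comp_hasDerivAt θ hcomp
  refine (((hasDerivAt_id θ).add_const (π / 2)).add him).congr_deriv ?_
  rw [imCLM_apply, show deriv L (circleMap 0 r θ) * (circleMap 0 r θ * I) =
    circleMap 0 r θ * deriv L (circleMap 0 r θ) * I by ring, mul_I_im, add_re, one_re]

lemma strictMono_tangentAngle (hL : DifferentiableOn ℂ L (ball 0 1))
    (hpos : ∀ z ∈ ball (0 : ℂ) 1, 0 < (1 + z * deriv L z).re) (hr0 : 0 ≤ r) (hr1 : r < 1) :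
    StrictMono (tangentAngle L r) :=
  strictMono_of_deriv_pos fun θ => by
    rw [(hasDerivAt_tangentAngle hL hr0 hr1 θ).deriv]
    exact hpos _ (circleMap_mem_ball hr0 hr1 θ)

lemma exp_mul_circleMap_mul_I (c : ℂ) (r θ : ℝ) :
    exp c * (circleMap 0 r θ * I) = ↑(r * Real.exp c.re) * exp (↑(θ + π / 2 + c.im) * I) := by
  have hI : exp (↑(π / 2) * I) = I := by
    rw [exp_mul_I, ← ofReal_cos, ← ofReal_sin, Real.cos_pi_div_two, Real.sin_pi_div_two]
    simp
  rw [ofReal_mul, ofReal_exp, circleMap_zero, show (↑(θ + π / 2 + c.im) : ℂ) * I =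
    θ * I + ↑(π / 2) * I + c.im * I by push_cast; ring, exp_add, exp_add, hI]
  conv_lhs => rw [← re_add_im c, exp_add]
  ring

lemma pos_of_hasDerivAt_mul_sin {g ρ ψ : ℝ → ℝ} {θ₀ θ : ℝ}
    (hg : ∀ t, HasDerivAt g (ρ t * Real.sin (ψ t - ψ θ₀)) t) (hρ : ∀ t, 0 < ρ t)
    (hψ : StrictMono ψ) (hψc : Continuous ψ) (hψper : ψ (θ₀ + 2 * π) = ψ θ₀ + 2 * π)
    (hg₀ : g θ₀ = 0) (hg₁ : g (θ₀ + 2 * π) = 0) (h₀ : θ₀ < θ) (h₁ : θ < θ₀ + 2 * π) :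
    0 < g θ := by
  have hgc : Continuous g := continuous_iff_continuousAt.2 fun t => (hg t).continuousAt
  -- `g` increases until `ψ` has turned by `π`, and decreases afterwards
  obtain ⟨θ₁, ⟨hθ₀₁, hθ₁₂⟩, hψθ₁⟩ : ∃ θ₁ ∈ Ioo θ₀ (θ₀ + 2 * π), ψ θ₁ = ψ θ₀ + π :=
    intermediate_value_Ioo (by linarith) hψc.continuousOn
      (by rw [hψper]; constructor <;> linarith [Real.pi_pos])
  rcases le_or_gt θ θ₁ with hθ | hθ
  · have hmono : StrictMonoOn g (Icc θ₀ θ₁) := by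
      refine strictMonoOn_of_deriv_pos (convex_Icc _ _) hgc.continuousOn fun t ht => ?_
      rw [interior_Icc] at ht
      rw [(hg t).deriv]
      have := hψ ht.1
      have := hψ ht.2
      exact mul_pos (hρ t) (Real.sin_pos_of_pos_of_lt_pi (by linarith) (by linarith))
    simpa [hg₀] using hmono (left_mem_Icc.2 hθ₀₁.le) ⟨h₀.le, hθ⟩ h₀
  · have hanti : StrictAntiOn g (Icc θ₁ (θ₀ + 2 * π)) := by
      refine strictAntiOn_of_deriv_neg (convex_Icc _ _) hgc.continuousOn fun t ht => ?_
      rw [interior_Icc] at ht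
      rw [(hg t).deriv]
      have := hψ ht.1
      have := hψ ht.2
      have hsin := Real.sin_pos_of_pos_of_lt_pi (x := ψ t - ψ θ₀ - π) (by linarith)
        (by linarith)
      rw [Real.sin_sub_pi] at hsin
      exact mul_neg_of_pos_of_neg (hρ t) (by linarith)
    simpa [hg₁] using hanti ⟨hθ.le, h₁.le⟩ (right_mem_Icc.2 hθ₁₂.le) h₁

/-- Signed distance of `w` from the tangent line of `θ ↦ f (circleMap 0 r θ)` at `θ`,
positive on the left of the direction of motion. -/
noncomputable def tangentDist (f L : ℂ → ℂ) (r θ : ℝ) (w : ℂ) : ℝ :=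
  (exp (-↑(tangentAngle L r θ) * I) * (w - f (circleMap 0 r θ))).im

lemma tangentDist_self (f L : ℂ → ℂ) (r θ : ℝ) :
    tangentDist f L r θ (f (circleMap 0 r θ)) = 0 := by
  simp [tangentDist]

lemma hasDerivAt_tangentDist_circleMap
    (hf : ∀ z ∈ ball (0 : ℂ) 1, HasDerivAt f (exp (L z)) z) (hr0 : 0 ≤ r) (hr1 : r < 1)
    (θ₀ t : ℝ) :
    HasDerivAt (fun t => tangentDist f L r θ₀ (f (circleMap 0 r t)))
      (r * Real.exp (L (circleMap 0 r t)).re *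
        Real.sin (tangentAngle L r t - tangentAngle L r θ₀)) t := by
  have hγ := (hf _ (circleMap_mem_ball hr0 hr1 t)).comp t (hasDerivAt_circleMap 0 r t)
  rw [exp_mul_circleMap_mul_I] at hγ
  have h := imCLM.hasFDerivAt.comp_hasDerivAt t
    ((hγ.sub_const (f (circleMap 0 r θ₀))).const_mul (exp (-↑(tangentAngle L r θ₀) * I)))
  refine h.congr_deriv ?_
  rw [imCLM_apply, mul_left_comm, ← exp_add, im_ofReal_mul, ← exp_ofReal_mul_I_im]
  unfold tangentAngle
  push_cast
  ring_nf

lemma tangentDist_circleMap_pos_or_eq (hf : ∀ z ∈ ball (0 : ℂ) 1, HasDerivAt f (exp (L z)) z)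
    (hL : DifferentiableOn ℂ L (ball 0 1))
    (hpos : ∀ z ∈ ball (0 : ℂ) 1, 0 < (1 + z * deriv L z).re) (hr0 : 0 < r) (hr1 : r < 1)
    (θ₀ θ : ℝ) :
    circleMap 0 r θ = circleMap 0 r θ₀ ∨ 0 < tangentDist f L r θ₀ (f (circleMap 0 r θ)) := by
  obtain ⟨k, hk, -⟩ := existsUnique_add_zsmul_mem_Ico Real.two_pi_pos θ θ₀
  rw [← (periodic_circleMap 0 r).zsmul k θ]
  rcases hk.1.eq_or_lt with heq | hlt
  · exact Or.inl (congrArg _ heq.symm)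
  refine Or.inr (pos_of_hasDerivAt_mul_sin
    (g := fun t => tangentDist f L r θ₀ (f (circleMap 0 r t)))
    (hasDerivAt_tangentDist_circleMap hf hr0.le hr1 θ₀)
    (fun t => mul_pos hr0 (Real.exp_pos _)) (strictMono_tangentAngle hL hpos hr0.le hr1)
    (continuous_iff_continuousAt.2 fun t => (hasDerivAt_tangentAngle hL hr0.le hr1 t).continuousAt)
    (tangentAngle_add_two_pi L r θ₀) (tangentDist_self f L r θ₀) ?_ hlt hk.2)
  simp only [periodic_circleMap 0 r θ₀, tangentDist_self]

lemma tangentDist_circleMap_nonneg (hf : ∀ z ∈ ball (0 : ℂ) 1, HasDerivAt f (exp (L z)) z)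
    (hL : DifferentiableOn ℂ L (ball 0 1))
    (hpos : ∀ z ∈ ball (0 : ℂ) 1, 0 < (1 + z * deriv L z).re) (hr0 : 0 < r) (hr1 : r < 1)
    (θ₀ θ : ℝ) : 0 ≤ tangentDist f L r θ₀ (f (circleMap 0 r θ)) := by
  rcases tangentDist_circleMap_pos_or_eq hf hL hpos hr0 hr1 θ₀ θ with h | h
  · rw [h, tangentDist_self]
  · exact h.le

lemma injOn_sphere (hf : ∀ z ∈ ball (0 : ℂ) 1, HasDerivAt f (exp (L z)) z)
    (hL : DifferentiableOn ℂ L (ball 0 1))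
    (hpos : ∀ z ∈ ball (0 : ℂ) 1, 0 < (1 + z * deriv L z).re) (hr0 : 0 < r) (hr1 : r < 1) :
    InjOn f (sphere 0 r) := by
  rw [← range_circleMap_of_nonneg 0 hr0.le]
  rintro _ ⟨θ, rfl⟩ _ ⟨θ₀, rfl⟩ h
  refine (tangentDist_circleMap_pos_or_eq hf hL hpos hr0 hr1 θ₀ θ).resolve_right ?_
  rw [h, tangentDist_self]
  exact lt_irrefl 0

def tangentHull (f L : ℂ → ℂ) (r : ℝ) : Set ℂ := ⋂ θ : ℝ, {w | 0 ≤ tangentDist f L r θ w}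

lemma convex_tangentHull (f L : ℂ → ℂ) (r : ℝ) : Convex ℝ (tangentHull f L r) :=
  convex_iInter fun θ => by
    set c := exp (-↑(tangentAngle L r θ) * I)
    have : {w | 0 ≤ tangentDist f L r θ w} =
        LinearMap.mulLeft ℝ c ⁻¹' {u | (c * f (circleMap 0 r θ)).im ≤ u.im} := by
      ext w
      simp [tangentDist, c, mul_sub]
    rw [this]
    exact (convex_halfSpace_im_ge _).linear_preimage _

lemma apply_circleMap_notMem_interior_tangentHull (f L : ℂ → ℂ) (r θ : ℝ) :
    f (circleMap 0 r θ) ∉ interior (tangentHull f L r) := by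
  intro h
  obtain ⟨ε, hε, hball⟩ := Metric.mem_nhds_iff.1 (mem_interior_iff_mem_nhds.1 h)
  set v := ↑(ε / 2) * I * exp (↑(tangentAngle L r θ) * I)
  have hv : f (circleMap 0 r θ) - v ∈ ball (f (circleMap 0 r θ)) ε := by
    rw [mem_ball_iff_norm, sub_sub_cancel_left, norm_neg]
    simp only [v, norm_mul, norm_exp_ofReal_mul_I, norm_I, norm_real, Real.norm_eq_abs,
      abs_of_pos (half_pos hε)]
    linarith
  have hnonneg : 0 ≤ tangentDist f L r θ (f (circleMap 0 r θ) - v) :=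
    mem_iInter.1 (hball hv) θ
  have hdist : tangentDist f L r θ (f (circleMap 0 r θ) - v) = -(ε / 2) := by
    simp only [tangentDist, sub_sub_cancel_left, v]
    rw [mul_neg, mul_left_comm, mul_assoc, ← exp_add]
    simp
  rw [hdist] at hnonneg
  linarith

lemma im_nonneg_of_forall_mem_frontier {F : ℂ → ℂ} {U : Set ℂ} (hU : Bornology.IsBounded U)
    (hF : DifferentiableOn ℂ F (closure U)) (hfr : ∀ z ∈ frontier U, 0 ≤ (F z).im) {z : ℂ}
    (hz : z ∈ closure U) : 0 ≤ (F z).im := by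
  -- maximum modulus principle for `exp (I * F)`, whose modulus is `exp (-im F)`
  have hnorm : ∀ w, ‖exp (I * F w)‖ = Real.exp (-(F w).im) := fun w => by simp [norm_exp]
  have := norm_le_of_forall_mem_frontier_norm_le hU (hF.const_mul I).cexp.diffContOnCl
    (fun w hw => by rw [hnorm, Real.exp_le_one_iff, neg_nonpos]; exact hfr w hw) hz
  rwa [hnorm, Real.exp_le_one_iff, neg_nonpos] at this

lemma image_ball_subset_tangentHull (hf : ∀ z ∈ ball (0 : ℂ) 1, HasDerivAt f (exp (L z)) z)
    (hL : DifferentiableOn ℂ L (ball 0 1))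
    (hpos : ∀ z ∈ ball (0 : ℂ) 1, 0 < (1 + z * deriv L z).re) (hr0 : 0 < r) (hr1 : r < 1) :
    f '' ball 0 r ⊆ tangentHull f L r := by
  rintro _ ⟨z, hz, rfl⟩
  refine mem_iInter.2 fun θ => im_nonneg_of_forall_mem_frontier
    (F := fun w => exp (-↑(tangentAngle L r θ) * I) * (f w - f (circleMap 0 r θ)))
    isBounded_ball ?_ ?_ (subset_closure hz)
  · rw [closure_ball _ hr0.ne']
    refine DifferentiableOn.const_mul (DifferentiableOn.sub_const ?_ _) _
    exact fun w hw => (hf w (closedBall_subset_ball hr1 hw)).differentiableAt.differentiableWithinAt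
  · rw [frontier_ball _ hr0.ne', ← range_circleMap_of_nonneg 0 hr0.le]
    rintro _ ⟨θ', rfl⟩
    exact tangentDist_circleMap_nonneg hf hL hpos hr0 hr1 θ θ'

lemma isOpen_image_of_hasDerivAt_ne_zero {F F' : ℂ → ℂ} {U : Set ℂ} (hU : IsOpen U)
    (hF : ∀ z ∈ U, HasDerivAt F (F' z) z) (hF' : ∀ z ∈ U, F' z ≠ 0) : IsOpen (F '' U) := by
  rw [isOpen_iff_mem_nhds]
  rintro _ ⟨z, hz, rfl⟩
  have hFa : AnalyticAt ℂ F z := DifferentiableOn.analyticAt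
    (fun w hw => (hF w hw).differentiableAt.differentiableWithinAt) (hU.mem_nhds hz)
  have hstrict := (hFa.contDiffAt (n := 1)).hasStrictDerivAt one_ne_zero
  rw [(hF z hz).deriv] at hstrict
  rw [← hstrict.map_nhds_eq (hF' z hz)]
  exact Filter.image_mem_map (hU.mem_nhds hz)

lemma image_ball_eq_interior_tangentHull (hf : ∀ z ∈ ball (0 : ℂ) 1, HasDerivAt f (exp (L z)) z)
    (hL : DifferentiableOn ℂ L (ball 0 1))
    (hpos : ∀ z ∈ ball (0 : ℂ) 1, 0 < (1 + z * deriv L z).re) (hr0 : 0 < r) (hr1 : r < 1) :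
    f '' ball 0 r = interior (tangentHull f L r) := by
  have hopen : IsOpen (f '' ball 0 r) := isOpen_image_of_hasDerivAt_ne_zero isOpen_ball
    (fun z hz => hf z (ball_subset_ball hr1.le hz)) (fun z _ => exp_ne_zero _)
  have hsub := interior_maximal (image_ball_subset_tangentHull hf hL hpos hr0 hr1) hopen
  have hconn := (convex_tangentHull f L r).interior.isPreconnected
  refine hsub.antisymm (hconn.subset_of_closure_inter_subset hopen
    ⟨f 0, hsub ⟨0, mem_ball_self hr0, rfl⟩, 0, mem_ball_self hr0, rfl⟩ ?_)
  -- a limit point of `f '' ball 0 r` is `f z` with `‖z‖ ≤ r`, and `‖z‖ = r` is excluded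
  rintro w ⟨hw, hwint⟩
  have hclosed : IsClosed (f '' closedBall 0 r) := ((isCompact_closedBall 0 r).image_of_continuousOn
    fun z hz => (hf z (closedBall_subset_ball hr1 hz)).continuousAt.continuousWithinAt).isClosed
  obtain ⟨z, hz, rfl⟩ := closure_minimal (image_mono ball_subset_closedBall) hclosed hw
  rcases (mem_closedBall_zero_iff.1 hz).lt_or_eq with hlt | heq
  · exact ⟨z, mem_ball_zero_iff.2 hlt, rfl⟩
  · have : z ∈ range (circleMap 0 r) := by
      rw [range_circleMap_of_nonneg 0 hr0.le, mem_sphere_zero_iff_norm]; exact heq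
    obtain ⟨θ, rfl⟩ := this
    exact absurd hwint (apply_circleMap_notMem_interior_tangentHull f L r θ)

lemma apply_notMem_image_ball (hf : ∀ z ∈ ball (0 : ℂ) 1, HasDerivAt f (exp (L z)) z)
    (hL : DifferentiableOn ℂ L (ball 0 1))
    (hpos : ∀ z ∈ ball (0 : ℂ) 1, 0 < (1 + z * deriv L z).re) (hr0 : 0 < r) (hr1 : r < 1)
    {z : ℂ} (hz : z ∈ sphere 0 r) : f z ∉ f '' ball 0 r := by
  rw [← range_circleMap_of_nonneg 0 hr0.le] at hz
  obtain ⟨θ, rfl⟩ := hz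
  rw [image_ball_eq_interior_tangentHull hf hL hpos hr0 hr1]
  exact apply_circleMap_notMem_interior_tangentHull f L r θ

lemma injOn_ball (hf : ∀ z ∈ ball (0 : ℂ) 1, HasDerivAt f (exp (L z)) z)
    (hL : DifferentiableOn ℂ L (ball 0 1))
    (hpos : ∀ z ∈ ball (0 : ℂ) 1, 0 < (1 + z * deriv L z).re) : InjOn f (ball 0 1) := by
  intro z₁ hz₁ z₂ hz₂ h
  wlog hle : ‖z₁‖ ≤ ‖z₂‖ generalizing z₁ z₂
  · exact (this hz₂ hz₁ h.symm (le_of_not_ge hle)).symm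
  have hs1 : ‖z₂‖ < 1 := mem_ball_zero_iff.1 hz₂
  rcases hle.lt_or_eq with hlt | heq
  · have hs0 : 0 < ‖z₂‖ := (norm_nonneg _).trans_lt hlt
    exact absurd (h ▸ mem_image_of_mem f (mem_ball_zero_iff.2 hlt))
      (apply_notMem_image_ball hf hL hpos hs0 hs1 (mem_sphere_zero_iff_norm.2 rfl))
  rcases (norm_nonneg z₂).eq_or_lt with h0 | hs0
  · rw [norm_eq_zero.1 (heq.trans h0.symm), norm_eq_zero.1 h0.symm]
  · exact injOn_sphere hf hL hpos hs0 hs1 (mem_sphere_zero_iff_norm.2 heq)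
      (mem_sphere_zero_iff_norm.2 rfl) h

lemma convex_image_ball (hf : ∀ z ∈ ball (0 : ℂ) 1, HasDerivAt f (exp (L z)) z)
    (hL : DifferentiableOn ℂ L (ball 0 1))
    (hpos : ∀ z ∈ ball (0 : ℂ) 1, 0 < (1 + z * deriv L z).re) : Convex ℝ (f '' ball 0 1) := by
  rintro _ ⟨z₁, hz₁, rfl⟩ _ ⟨z₂, hz₂, rfl⟩ s t hs ht hst
  obtain ⟨r, hr, hr1⟩ :=
    exists_between (max_lt (mem_ball_zero_iff.1 hz₁) (mem_ball_zero_iff.1 hz₂))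
  have hr0 : 0 < r := (norm_nonneg z₁).trans_lt ((le_max_left _ _).trans_lt hr)
  have hconv : Convex ℝ (f '' ball 0 r) := by
    rw [image_ball_eq_interior_tangentHull hf hL hpos hr0 hr1]
    exact (convex_tangentHull f L r).interior
  refine image_mono (ball_subset_ball hr1.le) (hconv ?_ ?_ hs ht hst)
  · exact mem_image_of_mem f (mem_ball_zero_iff.2 ((le_max_left _ _).trans_lt hr))
  · exact mem_image_of_mem f (mem_ball_zero_iff.2 ((le_max_right _ _).trans_lt hr))

end ConvexityCriterion

/-- The branch of `log H_{a,b}'` on the unit disk. -/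
noncomputable def logOfDerivH (a b : ℝ) (z : ℂ) : ℂ := a * log (1 + z) - b * log (1 - z)

lemma exp_logOfDerivH (a b : ℝ) {z : ℂ} (hz : ‖z‖ < 1) :
    exp (logOfDerivH a b z) = (1 + z) ^ (a : ℂ) / (1 - z) ^ (b : ℂ) := by
  rw [cpow_def_of_ne_zero (slitPlane_ne_zero (mem_slitPlane_of_norm_lt_one hz)),
    cpow_def_of_ne_zero (slitPlane_ne_zero (one_sub_mem_slitPlane hz)), ← exp_sub, logOfDerivH]
  ring_nf

lemma hasDerivAt_logOfDerivH (a b : ℝ) {z : ℂ} (hz : ‖z‖ < 1) :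
    HasDerivAt (logOfDerivH a b) (a / (1 + z) + b / (1 - z)) z := by
  have h₁ := ((hasDerivAt_id z).const_add 1).clog (mem_slitPlane_of_norm_lt_one hz)
  have h₂ := ((hasDerivAt_id z).const_sub 1).clog (one_sub_mem_slitPlane hz)
  refine ((h₁.const_mul (a : ℂ)).sub (h₂.const_mul (b : ℂ))).congr_deriv ?_
  simp only [id]
  ring

theorem stmt8 (a b : ℝ) (ha : a ≤ 0) (hb0 : 0 ≤ b) (hb : b ≤ a + 2) :
    (∀ z ∈ Metric.ball (0 : ℂ) 1,
        0 < (1 + (a : ℂ) * z / (1 + z) + (b : ℂ) * z / (1 - z)).re) ∧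
    ∀ H : ℂ → ℂ,
      (∀ z ∈ Metric.ball (0 : ℂ) 1, HasDerivAt H ((1 + z) ^ (a : ℂ) / (1 - z) ^ (b : ℂ)) z) →
      H 0 = 0 →
      Set.InjOn H (Metric.ball (0 : ℂ) 1) ∧ Convex ℝ ((H '' Metric.ball (0 : ℂ) 1) : Set ℂ) := by
  have hre (z : ℂ) (hz : z ∈ ball (0 : ℂ) 1) :=
    re_one_add_div_add_div_pos ha hb0 hb (mem_ball_zero_iff.1 hz)
  refine ⟨hre, fun H hH _ => ?_⟩
  have hf (z : ℂ) (hz : z ∈ ball (0 : ℂ) 1) : HasDerivAt H (exp (logOfDerivH a b z)) z := by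
    rw [exp_logOfDerivH a b (mem_ball_zero_iff.1 hz)]
    exact hH z hz
  have hL : DifferentiableOn ℂ (logOfDerivH a b) (ball 0 1) := fun z hz =>
    (hasDerivAt_logOfDerivH a b (mem_ball_zero_iff.1 hz)).differentiableAt.differentiableWithinAt
  have hpos (z : ℂ) (hz : z ∈ ball (0 : ℂ) 1) : 0 < (1 + z * deriv (logOfDerivH a b) z).re := by
    rw [(hasDerivAt_logOfDerivH a b (mem_ball_zero_iff.1 hz)).deriv]
    convert hre z hz using 2
    ring
  exact ⟨injOn_ball hf hL hpos, convex_image_ball hf hL hpos⟩
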